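/- Let U ⊆ ℝ² be open, σ = (x,y,t) : U → ℝ³ a C² map with (N₁,N₂)(u,v) ≠ (0,0) for all (u,v) ∈ U, let Ω ⊆ ℝ³ be open with σ(U) ⊆ Ω, and let ν₁, ν₂ : Ω → ℝ be C¹ functions with ν₁² + ν₂² = 1 on Ω such that (ν₁∘σ, ν₂∘σ) = (N₁,N₂)/√(N₁²+N₂²) on U. Then at every (u,v) ∈ U with ∂(x,y)(u,v) ≠ 0, (Xν₁ + Yν₂)(σ(u,v)) = (∂(ν₁∘σ, y) + ∂(x, ν₂∘σ))/∂(x,y) evaluated at (u,v). (Local coordinate formula for the horizontal mean curvature.) -/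

import Mathlib

/-- Partial derivative in the first variable. -/
noncomputable def pu (f : ℝ × ℝ → ℝ) (p : ℝ × ℝ) : ℝ := deriv (fun u => f (u, p.2)) p.1

/-- Partial derivative in the second variable. -/
noncomputable def pv (f : ℝ × ℝ → ℝ) (p : ℝ × ℝ) : ℝ := deriv (fun v => f (p.1, v)) p.2

/-- Jacobian ∂(f,g) = f_u g_v − f_v g_u. -/
noncomputable def jac (f g : ℝ × ℝ → ℝ) (p : ℝ × ℝ) : ℝ :=
  pu f p * pv g p - pv f p * pu g p

/-- First component of the horizontal normal: N₁ = ∂(y,t) + 2y ∂(x,y). -/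
noncomputable def N1 (x y t : ℝ × ℝ → ℝ) (p : ℝ × ℝ) : ℝ :=
  jac y t p + 2 * y p * jac x y p

/-- Second component of the horizontal normal: N₂ = ∂(t,x) − 2x ∂(x,y). -/
noncomputable def N2 (x y t : ℝ × ℝ → ℝ) (p : ℝ × ℝ) : ℝ :=
  jac t x p - 2 * x p * jac x y p

/-- The Heisenberg horizontal vector field X = ∂/∂x + 2y ∂/∂t acting on a function
of (x,y,t) ∈ ℝ³. -/
noncomputable def Xop (f : ℝ × ℝ × ℝ → ℝ) (p : ℝ × ℝ × ℝ) : ℝ :=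
  deriv (fun x => f (x, p.2.1, p.2.2)) p.1
    + 2 * p.2.1 * deriv (fun t => f (p.1, p.2.1, t)) p.2.2

/-- The Heisenberg horizontal vector field Y = ∂/∂y − 2x ∂/∂t acting on a function
of (x,y,t) ∈ ℝ³. -/
noncomputable def Yop (f : ℝ × ℝ × ℝ → ℝ) (p : ℝ × ℝ × ℝ) : ℝ :=
  deriv (fun y => f (p.1, y, p.2.2)) p.2.1
    - 2 * p.1 * deriv (fun t => f (p.1, p.2.1, t)) p.2.2

/-!
Write `A = Dν₁(σ p)` and `B = Dν₂(σ p)`. By the chain rule the two Jacobians on the right are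
linear in `A`, `B`, and a short computation gives
`∂(ν₁∘σ, y) + ∂(x, ν₂∘σ) = ∂(x,y) (Xν₁ + Yν₂) - (N₁ ∂ₜν₁ + N₂ ∂ₜν₂)`.
Differentiating `ν₁² + ν₂² = 1` gives `ν₁ ∂ₜν₁ + ν₂ ∂ₜν₂ = 0`, and `(N₁, N₂)` is a multiple of
`(ν₁, ν₂)` along the surface, so the error term vanishes.
-/

lemma ContinuousLinearMap.apply_triple (L : ℝ × ℝ × ℝ →L[ℝ] ℝ) (a b c : ℝ) :
    L (a, b, c) = a * L (1, 0, 0) + b * L (0, 1, 0) + c * L (0, 0, 1) := by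
  have h : ((a, b, c) : ℝ × ℝ × ℝ) = a • (1, 0, 0) + b • (0, 1, 0) + c • (0, 0, 1) := by
    simp
  rw [h, map_add, map_add, map_smul, map_smul, map_smul, smul_eq_mul, smul_eq_mul, smul_eq_mul]

section HorizontalFields

variable {f : ℝ × ℝ × ℝ → ℝ} {L : ℝ × ℝ × ℝ →L[ℝ] ℝ} {a b c : ℝ}

lemma Xop_eq_of_hasFDerivAt (hf : HasFDerivAt f L (a, b, c)) :
    Xop f (a, b, c) = L (1, 0, 0) + 2 * b * L (0, 0, 1) := by
  have hx : deriv (fun s => f (s, b, c)) a = L (1, 0, 0) :=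
    (hf.comp_hasDerivAt a ((hasDerivAt_id a).prodMk
      ((hasDerivAt_const a b).prodMk (hasDerivAt_const a c)))).deriv
  have ht : deriv (fun s => f (a, b, s)) c = L (0, 0, 1) :=
    (hf.comp_hasDerivAt c ((hasDerivAt_const c a).prodMk
      ((hasDerivAt_const c b).prodMk (hasDerivAt_id c)))).deriv
  simp only [Xop, hx, ht]

lemma Yop_eq_of_hasFDerivAt (hf : HasFDerivAt f L (a, b, c)) :
    Yop f (a, b, c) = L (0, 1, 0) - 2 * a * L (0, 0, 1) := by
  have hy : deriv (fun s => f (a, s, c)) b = L (0, 1, 0) :=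
    (hf.comp_hasDerivAt b ((hasDerivAt_const b a).prodMk
      ((hasDerivAt_id b).prodMk (hasDerivAt_const b c)))).deriv
  have ht : deriv (fun s => f (a, b, s)) c = L (0, 0, 1) :=
    (hf.comp_hasDerivAt c ((hasDerivAt_const c a).prodMk
      ((hasDerivAt_const c b).prodMk (hasDerivAt_id c)))).deriv
  simp only [Yop, hy, ht]

end HorizontalFields

section ChainRule

variable {f x y t : ℝ × ℝ → ℝ} {p : ℝ × ℝ} {g : ℝ × ℝ × ℝ → ℝ} {L : ℝ × ℝ × ℝ →L[ℝ] ℝ}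

lemma hasDerivAt_pu (hf : DifferentiableAt ℝ f p) :
    HasDerivAt (fun u => f (u, p.2)) (pu f p) p.1 :=
  (hf.comp p.1 (differentiableAt_id.prodMk (differentiableAt_const _))).hasDerivAt

lemma hasDerivAt_pv (hf : DifferentiableAt ℝ f p) :
    HasDerivAt (fun v => f (p.1, v)) (pv f p) p.2 :=
  (hf.comp p.2 ((differentiableAt_const _).prodMk differentiableAt_id)).hasDerivAt

variable (hx : DifferentiableAt ℝ x p) (hy : DifferentiableAt ℝ y p)
  (ht : DifferentiableAt ℝ t p) (hg : HasFDerivAt g L (x p, y p, t p))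
include hx hy ht hg

lemma pu_comp :
    pu (fun q => g (x q, y q, t q)) p = L (pu x p, pu y p, pu t p) :=
  (hg.comp_hasDerivAt p.1 ((hasDerivAt_pu hx).prodMk
    ((hasDerivAt_pu hy).prodMk (hasDerivAt_pu ht)))).deriv

lemma pv_comp :
    pv (fun q => g (x q, y q, t q)) p = L (pv x p, pv y p, pv t p) :=
  (hg.comp_hasDerivAt p.2 ((hasDerivAt_pv hx).prodMk
    ((hasDerivAt_pv hy).prodMk (hasDerivAt_pv ht)))).deriv

lemma jac_comp_left :
    jac (fun q => g (x q, y q, t q)) y p = jac x y p * L (1, 0, 0) - jac y t p * L (0, 0, 1) := by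
  rw [jac, pu_comp hx hy ht hg, pv_comp hx hy ht hg, L.apply_triple (pu x p),
    L.apply_triple (pv x p), jac, jac]
  ring

lemma jac_comp_right :
    jac x (fun q => g (x q, y q, t q)) p = jac x y p * L (0, 1, 0) - jac t x p * L (0, 0, 1) := by
  rw [jac, pu_comp hx hy ht hg, pv_comp hx hy ht hg, L.apply_triple (pu x p),
    L.apply_triple (pv x p), jac, jac]
  ring

end ChainRule

lemma HasFDerivAt.mul_add_mul_eq_zero_of_unit {E : Type*} [NormedAddCommGroup E] [NormedSpace ℝ E]
    {ν₁ ν₂ : E → ℝ} {A B : E →L[ℝ] ℝ} {q : E} (h₁ : HasFDerivAt ν₁ A q)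
    (h₂ : HasFDerivAt ν₂ B q) (hunit : ∀ᶠ r in nhds q, ν₁ r ^ 2 + ν₂ r ^ 2 = 1) (v : E) :
    ν₁ q * A v + ν₂ q * B v = 0 := by
  have hD : HasFDerivAt (fun r => ν₁ r ^ 2 + ν₂ r ^ 2) _ q := (h₁.pow 2).add (h₂.pow 2)
  have hD0 : HasFDerivAt (fun r => ν₁ r ^ 2 + ν₂ r ^ 2) (0 : E →L[ℝ] ℝ) q :=
    (hasFDerivAt_const (1 : ℝ) q).congr_of_eventuallyEq hunit
  have h := congrArg (fun M : E →L[ℝ] ℝ => M v) (hD.unique hD0)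
  norm_num at h
  linarith

lemma eq_sqrt_mul_of_eq_div {a b u : ℝ} (h : u = a / √(a ^ 2 + b ^ 2)) :
    a = √(a ^ 2 + b ^ 2) * u := by
  rcases eq_or_ne (√(a ^ 2 + b ^ 2)) 0 with hr | hr
  · have hsq : a ^ 2 + b ^ 2 = 0 := (Real.sqrt_eq_zero (by positivity)).1 hr
    rw [hr, zero_mul]
    nlinarith [sq_nonneg a, sq_nonneg b]
  · rw [h, mul_div_cancel₀ a hr]

lemma mul_add_mul_eq_zero_of_eq_div {a b u w c d : ℝ} (hu : u = a / √(a ^ 2 + b ^ 2))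
    (hw : w = b / √(a ^ 2 + b ^ 2)) (h : u * c + w * d = 0) : a * c + b * d = 0 := by
  have ha := eq_sqrt_mul_of_eq_div hu
  have hb : b = √(a ^ 2 + b ^ 2) * w := by
    rw [add_comm] at hw ⊢
    exact eq_sqrt_mul_of_eq_div hw
  linear_combination c * ha + d * hb + √(a ^ 2 + b ^ 2) * h

theorem stmt_7_general (U : Set (ℝ × ℝ)) (hU : IsOpen U)
    (x y t : ℝ × ℝ → ℝ)
    (hx : ContDiffOn ℝ 2 x U) (hy : ContDiffOn ℝ 2 y U) (ht : ContDiffOn ℝ 2 t U)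
    (Ω : Set (ℝ × ℝ × ℝ)) (hΩ : IsOpen Ω)
    (hσΩ : ∀ p ∈ U, (x p, y p, t p) ∈ Ω)
    (ν₁ ν₂ : ℝ × ℝ × ℝ → ℝ)
    (hν₁ : ContDiffOn ℝ 1 ν₁ Ω) (hν₂ : ContDiffOn ℝ 1 ν₂ Ω)
    (hunit : ∀ q ∈ Ω, ν₁ q ^ 2 + ν₂ q ^ 2 = 1)
    (hrestr : ∀ p ∈ U,
      ν₁ (x p, y p, t p) = N1 x y t p / Real.sqrt (N1 x y t p ^ 2 + N2 x y t p ^ 2) ∧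
      ν₂ (x p, y p, t p) = N2 x y t p / Real.sqrt (N1 x y t p ^ 2 + N2 x y t p ^ 2)) :
    ∀ p ∈ U, jac x y p ≠ 0 →
      Xop ν₁ (x p, y p, t p) + Yop ν₂ (x p, y p, t p)
        = (jac (fun q => ν₁ (x q, y q, t q)) y p
            + jac x (fun q => ν₂ (x q, y q, t q)) p) / jac x y p := by
  intro p hp hJ
  have hpU := hU.mem_nhds hp
  have hqΩ := hΩ.mem_nhds (hσΩ p hp)
  have hxd := (hx.differentiableOn two_ne_zero).differentiableAt hpU
  have hyd := (hy.differentiableOn two_ne_zero).differentiableAt hpU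
  have htd := (ht.differentiableOn two_ne_zero).differentiableAt hpU
  have hA := ((hν₁.differentiableOn one_ne_zero).differentiableAt hqΩ).hasFDerivAt
  have hB := ((hν₂.differentiableOn one_ne_zero).differentiableAt hqΩ).hasFDerivAt
  have hperp := hA.mul_add_mul_eq_zero_of_unit hB (Filter.eventually_of_mem hqΩ hunit) (0, 0, 1)
  obtain ⟨hr₁, hr₂⟩ := hrestr p hp
  have hcon := mul_add_mul_eq_zero_of_eq_div hr₁ hr₂ hperp
  rw [Xop_eq_of_hasFDerivAt hA, Yop_eq_of_hasFDerivAt hB, jac_comp_left hxd hyd htd hA,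
    jac_comp_right hxd hyd htd hB, eq_div_iff hJ]
  simp only [N1, N2] at hcon
  linear_combination hcon

/-- local coordinate formula for the horizontal mean curvature. If
(ν₁,ν₂) is a C¹ extension to an open Ω ⊇ σ(U) of the unit horizontal normal of a C²
noncharacteristic patch σ = (x,y,t), then at each point where ∂(x,y) ≠ 0,
Xν₁ + Yν₂ = (∂(ν₁∘σ, y) + ∂(x, ν₂∘σ))/∂(x,y). -/
theorem stmt_7 (U : Set (ℝ × ℝ)) (hU : IsOpen U)
    (x y t : ℝ × ℝ → ℝ)
    (hx : ContDiffOn ℝ 2 x U) (hy : ContDiffOn ℝ 2 y U) (ht : ContDiffOn ℝ 2 t U)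
    (hN : ∀ p ∈ U, ¬(N1 x y t p = 0 ∧ N2 x y t p = 0))
    (Ω : Set (ℝ × ℝ × ℝ)) (hΩ : IsOpen Ω)
    (hσΩ : ∀ p ∈ U, (x p, y p, t p) ∈ Ω)
    (ν₁ ν₂ : ℝ × ℝ × ℝ → ℝ)
    (hν₁ : ContDiffOn ℝ 1 ν₁ Ω) (hν₂ : ContDiffOn ℝ 1 ν₂ Ω)
    (hunit : ∀ q ∈ Ω, ν₁ q ^ 2 + ν₂ q ^ 2 = 1)
    (hrestr : ∀ p ∈ U,
      ν₁ (x p, y p, t p) = N1 x y t p / Real.sqrt (N1 x y t p ^ 2 + N2 x y t p ^ 2) ∧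
      ν₂ (x p, y p, t p) = N2 x y t p / Real.sqrt (N1 x y t p ^ 2 + N2 x y t p ^ 2)) :
    ∀ p ∈ U, jac x y p ≠ 0 →
      Xop ν₁ (x p, y p, t p) + Yop ν₂ (x p, y p, t p)
        = (jac (fun q => ν₁ (x q, y q, t q)) y p
            + jac x (fun q => ν₂ (x q, y q, t q)) p) / jac x y p :=
  stmt_7_general U hU x y t hx hy ht Ω hΩ hσΩ ν₁ ν₂ hν₁ hν₂ hunit hrestr
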